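/- Let m be a positive even integer, let p be a positive semidefinite form of degree m in n variables that is not a sum of squares of polynomials, let ℓ be a nonzero linear form in n variables, and let s ≥ 1 be an integer. Then ℓ^{2s}·p is a positive semidefinite form of degree m + 2s that is not a sum of squares of polynomials. In particular, if Δ_{n,m} ≠ ∅ then Δ_{n,m+2s} ≠ ∅ for every s ≥ 1. -/

import Mathlib

open MvPolynomial

/-- A real polynomial is a sum of squares (sos) if it equals a finite sum of squares
of real polynomials. -/
def IsSos {n : ℕ} (p : MvPolynomial (Fin n) ℝ) : Prop :=
  ∃ (k : ℕ) (g : Fin k → MvPolynomial (Fin n) ℝ), p = ∑ i, g i ^ 2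

/-- A real polynomial is positive semidefinite (psd) if it takes nonnegative values
at every real point. -/
def Psd {n : ℕ} (p : MvPolynomial (Fin n) ℝ) : Prop :=
  ∀ x : Fin n → ℝ, 0 ≤ eval x p

/-- If p is a psd form of degree m that is not sos and ℓ is a nonzero linear form,
then ℓ^(2s)·p is a psd form of degree m + 2s that is not sos. -/

-- sum of squares equal to zero: each term is zero
lemma sos_eq_zero {n k : ℕ} (g : Fin k → MvPolynomial (Fin n) ℝ)
    (h : ∑ i, g i ^ 2 = 0) (i : Fin k) : g i = 0 := by
  apply MvPolynomial.funext
  intro x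
  have hx : ∑ j, (eval x (g j)) ^ 2 = 0 := by
    have := congrArg (eval x) h
    simpa [map_sum] using this
  have := (Finset.sum_eq_zero_iff_of_nonneg (fun j _ => sq_nonneg (eval x (g j)))).mp hx
    i (Finset.mem_univ i)
  have : eval x (g i) = 0 := by nlinarith [this]
  simpa using this

lemma degree_eq_one {n : ℕ} {d : Fin n →₀ ℕ} (h : Finsupp.degree d = 1) :
    ∃ i, d = Finsupp.single i 1 := by
  have h0 : d ≠ 0 := by rintro rfl; simp [map_zero] at h
  obtain ⟨i, hi⟩ := Finsupp.support_nonempty_iff.mpr h0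
  refine ⟨i, ?_⟩
  have hdi : 1 ≤ d i := Nat.one_le_iff_ne_zero.mpr (Finsupp.mem_support_iff.mp hi)
  ext j
  rcases eq_or_ne j i with rfl | hj
  · have hle : d j ≤ Finsupp.degree d :=
      Finset.single_le_sum (fun a _ => Nat.zero_le (d a)) hi
    simp only [Finsupp.single_eq_same]
    omega
  · simp only [Finsupp.single_apply, if_neg (fun hc : i = j => hj hc.symm)]
    by_contra hdj
    have hjmem : j ∈ d.support := Finsupp.mem_support_iff.mpr hdj
    have hsub : ({i, j} : Finset (Fin n)) ⊆ d.support := by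
      intro a ha
      simp only [Finset.mem_insert, Finset.mem_singleton] at ha
      rcases ha with rfl | rfl <;> assumption
    have := Finset.sum_le_sum_of_subset_of_nonneg hsub (fun a _ _ => Nat.zero_le (d a))
    rw [Finset.sum_pair (Ne.symm hj)] at this
    rw [Finsupp.degree_apply] at h
    omega

lemma homog_one_decomp {n : ℕ} {l : MvPolynomial (Fin n) ℝ} (hl : l.IsHomogeneous 1) :
    l = ∑ i, C (coeff (Finsupp.single i 1) l) * X i := by
  ext d
  rw [coeff_sum]
  simp only [coeff_C_mul, coeff_X']
  by_cases hd : ∃ i, d = Finsupp.single i 1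
  · obtain ⟨i, rfl⟩ := hd
    rw [Finset.sum_eq_single i]
    · simp
    · intro j _ hj
      rw [if_neg, mul_zero]
      exact fun hc => hj (Finsupp.single_left_injective one_ne_zero hc.symm ▸ rfl)
    · simp
  · have h1 : coeff d l = 0 := by
      by_contra hc
      refine hd (degree_eq_one ?_)
      have := hl hc
      rw [Finsupp.degree_eq_weight_one]
      exact_mod_cast this
    rw [h1, Finset.sum_eq_zero]
    intro j _
    rw [if_neg, mul_zero]
    exact fun hc => hd ⟨j, hc.symm⟩

lemma X_dvd_of_aeval_update_zero {n : ℕ} (i : Fin n) (r : MvPolynomial (Fin n) ℝ)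
    (h : aeval (Function.update X i (0 : MvPolynomial (Fin n) ℝ)) r = 0) : X i ∣ r := by
  rw [X_dvd_iff_modMonomial_eq_zero]
  set u := Function.update X i (0 : MvPolynomial (Fin n) ℝ) with hu
  have hfix : aeval u (r.modMonomial (Finsupp.single i 1)) = r.modMonomial (Finsupp.single i 1) := by
    rw [aeval_def, algebraMap_eq]
    rw [show (eval₂ C u (r.modMonomial (Finsupp.single i 1)))
        = eval₂ C X (r.modMonomial (Finsupp.single i 1)) from
      eval₂_congr _ _ _ ?_]
    · exact eval₂_eta _
    · intro j c hjc hcoeff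
      rcases eq_or_ne j i with rfl | hj
      · exfalso
        apply hcoeff
        apply coeff_modMonomial_of_le
        rw [Finsupp.single_le_iff]
        exact Nat.one_le_iff_ne_zero.mpr (Finsupp.mem_support_iff.mp hjc)
      · show u j = X j
        exact Function.update_of_ne hj _ _
  have hdecomp := divMonomial_add_modMonomial_single r i
  have := congrArg (aeval u) hdecomp
  rw [map_add, map_mul, h] at this
  have hXi : aeval (R := ℝ) u (X i) = 0 := by
    rw [aeval_X]; exact Function.update_self i _ X
  rw [hXi, zero_mul, zero_add, hfix] at this
  exact this

lemma sos_of_X_pow_mul {n : ℕ} (i : Fin n) :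
    ∀ s : ℕ, ∀ q : MvPolynomial (Fin n) ℝ,
      (∃ (k : ℕ) (g : Fin k → MvPolynomial (Fin n) ℝ), X i ^ (2 * s) * q = ∑ j, g j ^ 2) →
      ∃ (k : ℕ) (g : Fin k → MvPolynomial (Fin n) ℝ), q = ∑ j, g j ^ 2 := by
  intro s
  induction s with
  | zero => intro q h; simpa using h
  | succ s ih =>
    rintro q ⟨k, g, hg⟩
    set u := Function.update X i (0 : MvPolynomial (Fin n) ℝ) with hu
    have hzero : ∑ j, (aeval u (g j)) ^ 2 = 0 := by
      have := congrArg (aeval u) hg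
      rw [map_mul, map_pow] at this
      have hXi : aeval (R := ℝ) u (X i) = 0 := by
        rw [aeval_X]; exact Function.update_self i _ X
      rw [hXi, zero_pow (by omega), zero_mul] at this
      rw [map_sum] at this
      simp only [map_pow] at this
      exact this.symm
    have hdvd : ∀ j, X i ∣ g j := fun j =>
      X_dvd_of_aeval_update_zero i (g j) (sos_eq_zero _ hzero j)
    choose g' hg' using hdvd
    have key : X i ^ 2 * (X i ^ (2 * s) * q) = X i ^ 2 * (∑ j, g' j ^ 2) := by
      rw [← mul_assoc, ← pow_add]
      have : 2 + 2 * s = 2 * (s + 1) := by ring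
      rw [this, hg, Finset.mul_sum]
      apply Finset.sum_congr rfl
      intro j _
      rw [hg' j]; ring
    have hcancel : X i ^ (2 * s) * q = ∑ j, g' j ^ 2 :=
      mul_left_cancel₀ (pow_ne_zero _ (X_ne_zero i)) key
    exact ih q ⟨k, g', hcancel⟩

lemma aeval_comp_eq {n : ℕ} (f g : Fin n → MvPolynomial (Fin n) ℝ)
    (hfg : ∀ j, aeval g (f j) = X j) (h : MvPolynomial (Fin n) ℝ) :
    aeval g (aeval f h) = h := by
  show bind₁ g (bind₁ f h) = h
  rw [bind₁_bind₁]
  have : (fun i => bind₁ g (f i)) = (X : Fin n → MvPolynomial (Fin n) ℝ) := by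
    funext j; exact hfg j
  rw [this, bind₁_X_left]
  rfl

theorem pow_linear_mul_not_sos (n m : ℕ) (hm : Even m) (hm0 : 0 < m)
    (p : MvPolynomial (Fin n) ℝ) (hphom : p.IsHomogeneous m) (hppsd : Psd p)
    (hpns : ¬ IsSos p)
    (l : MvPolynomial (Fin n) ℝ) (hl0 : l ≠ 0) (hl : l.IsHomogeneous 1)
    (s : ℕ) (hs : 1 ≤ s) :
    (l ^ (2 * s) * p).IsHomogeneous (m + 2 * s) ∧ Psd (l ^ (2 * s) * p) ∧
      ¬ IsSos (l ^ (2 * s) * p) := by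
  have hlpow : ∀ k : ℕ, (l ^ k).IsHomogeneous k := by
    intro k
    induction k with
    | zero => simpa using isHomogeneous_one (Fin n) ℝ
    | succ k ih => rw [pow_succ]; exact ih.mul hl
  refine ⟨?_, ?_, ?_⟩
  · have := (hlpow (2 * s)).mul hphom
    rwa [Nat.add_comm] at this
  · intro x
    rw [eval_mul, eval_pow, pow_mul]
    exact mul_nonneg (pow_nonneg (sq_nonneg _) s) (hppsd x)
  · rintro ⟨k, h, hsum⟩
    set c : Fin n → ℝ := fun i => coeff (Finsupp.single i 1) l with hcdef
    have hlsum : l = ∑ i, C (c i) * X i := homog_one_decomp hl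
    have hex : ∃ i, c i ≠ 0 := by
      by_contra hno
      push_neg at hno
      apply hl0
      rw [hlsum]
      apply Finset.sum_eq_zero
      intro i _
      rw [hno i, map_zero, zero_mul]
    obtain ⟨i0, hc0⟩ := hex
    set S : MvPolynomial (Fin n) ℝ := ∑ i ∈ Finset.univ.erase i0, C (c i) * X i with hSdef
    have hlS : l = C (c i0) * X i0 + S := by
      rw [hlsum, hSdef, ← Finset.add_sum_erase _ _ (Finset.mem_univ i0)]
    set f : Fin n → MvPolynomial (Fin n) ℝ :=
      Function.update X i0 (C (c i0)⁻¹ * (X i0 - S)) with hfdef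
    set g : Fin n → MvPolynomial (Fin n) ℝ := Function.update X i0 l with hgdef
    have hgS : aeval (R := ℝ) g S = S := by
      rw [hSdef, map_sum]
      apply Finset.sum_congr rfl
      intro i hi
      rw [map_mul, aeval_C, aeval_X, hgdef,
        Function.update_of_ne (Finset.ne_of_mem_erase hi)]
      rfl
    have hψf : ∀ j, aeval g (f j) = X j := by
      intro j
      rcases eq_or_ne j i0 with rfl | hj
      · rw [hfdef, Function.update_self, map_mul, map_sub, aeval_C, aeval_X, hgdef,
          Function.update_self, hgS]
        have : l - S = C (c j) * X j := by rw [hlS]; ring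
        rw [this, algebraMap_eq, ← mul_assoc, ← C_mul, inv_mul_cancel₀ hc0, C_1, one_mul]
      · rw [hfdef, Function.update_of_ne hj, aeval_X, hgdef, Function.update_of_ne hj]
    have hφl : aeval f l = X i0 := by
      have hfS : aeval (R := ℝ) f S = S := by
        rw [hSdef, map_sum]
        apply Finset.sum_congr rfl
        intro i hi
        rw [map_mul, aeval_C, aeval_X, hfdef,
          Function.update_of_ne (Finset.ne_of_mem_erase hi)]
        rfl
      rw [hlS, map_add, map_mul, aeval_C, aeval_X, hfdef, Function.update_self, hfS,
        algebraMap_eq, ← mul_assoc, ← C_mul, mul_inv_cancel₀ hc0, C_1, one_mul]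
      ring
    have hstep := congrArg (aeval f) hsum
    rw [map_mul, map_pow, hφl, map_sum] at hstep
    simp only [map_pow] at hstep
    obtain ⟨k', g', hq⟩ :=
      sos_of_X_pow_mul i0 s (aeval f p) ⟨k, fun j => aeval f (h j), hstep⟩
    apply hpns
    refine ⟨k', fun j => aeval g (g' j), ?_⟩
    have hback := congrArg (aeval g) hq
    rw [aeval_comp_eq f g hψf p, map_sum] at hback
    simp only [map_pow] at hback
    exact hback
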